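/- For any α ∈ ℝ³, the Jones rotation R(α) = exp(−i α·σ) and the Mueller rotation M(α) = exp(2[α]×) satisfy the covariance relation S(R(α)x) = M(α)S(x) for all x ∈ ℂ², where S denotes the Stokes map. -/

import Mathlib

open Matrix

/-- The Pauli matrices `σ₁, σ₂, σ₃`. -/
noncomputable def pauli : Fin 3 → Matrix (Fin 2) (Fin 2) ℂ :=
  ![!![1, 0; 0, -1], !![0, 1; 1, 0], !![0, -Complex.I; Complex.I, 0]]

/-- `v·σ = v₁σ₁ + v₂σ₂ + v₃σ₃` for a real vector `v`. -/
noncomputable def pdot (v : Fin 3 → ℝ) : Matrix (Fin 2) (Fin 2) ℂ :=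
  (v 0 : ℂ) • pauli 0 + (v 1 : ℂ) • pauli 1 + (v 2 : ℂ) • pauli 2

/-- The cross-product matrix `[α]×`. -/
def crossMat (a : Fin 3 → ℝ) : Matrix (Fin 3) (Fin 3) ℝ :=
  !![0, -a 2, a 1; a 2, 0, -a 0; -a 1, a 0, 0]

/-- The Stokes map `S(x) = (xᴴσ₁x, xᴴσ₂x, xᴴσ₃x)`. -/
noncomputable def stokes (x : Fin 2 → ℂ) : Fin 3 → ℝ :=
  ![‖x 0‖ ^ 2 - ‖x 1‖ ^ 2,
    2 * (x 0 * star (x 1)).re,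
    -2 * (x 0 * star (x 1)).im]

/-!
With `A = -i α·σ` skew-Hermitian, `S(Rx)_k = Re (xᴴ (exp (-A) σ_k exp A) x)`. Hadamard's lemma
turns `exp (-A) X exp A` into `exp (ad) X` with `ad X = X A - A X`, and by the Pauli commutation
relations `ad σ_k = ∑ₗ (2[α]×)ₖₗ σₗ`. So `exp ad` acts on the real span of the Pauli matrices
through the matrix `exp (2[α]×)`, and `X ↦ Re (xᴴ X x)` is real linear.
-/

open NormedSpace ContinuousLinearMap

section Hadamard

variable {𝕂 𝔸 : Type*} [RCLike 𝕂] [NormedRing 𝔸] [NormedAlgebra 𝕂 𝔸]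

noncomputable def ContinuousLinearMap.mulLeftRingHom : 𝔸 →+* (𝔸 →L[𝕂] 𝔸) where
  toFun := mul 𝕂 𝔸
  map_one' := by ext; simp
  map_mul' a b := by ext; simp [mul_assoc]
  map_zero' := by simp
  map_add' := by simp

noncomputable def ContinuousLinearMap.mulRightRingHom : 𝔸ᵐᵒᵖ →+* (𝔸 →L[𝕂] 𝔸) where
  toFun a := (mul 𝕂 𝔸).flip a.unop
  map_one' := by ext; simp
  map_mul' a b := by ext; simp [mul_assoc]
  map_zero' := by ext; simp
  map_add' a b := by ext; simp

theorem NormedSpace.exp_neg_mul_mul_exp [CompleteSpace 𝔸] (A X : 𝔸) :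
    exp (-A) * X * exp A = exp ((mul 𝕂 𝔸).flip A - mul 𝕂 𝔸 A) X := by
  let : NormedAlgebra ℚ 𝔸 := .restrictScalars ℚ 𝕂 𝔸
  let : NormedAlgebra ℚ (𝔸 →L[𝕂] 𝔸) := .restrictScalars ℚ 𝕂 _
  have hcomm : Commute ((mul 𝕂 𝔸).flip A) (mul 𝕂 𝔸 (-A)) := by
    ext X; simp [mul_assoc]
  have hleft : exp (mul 𝕂 𝔸 (-A)) = mul 𝕂 𝔸 (exp (-A)) :=
    (map_exp (mulLeftRingHom (𝕂 := 𝕂)) (mul 𝕂 𝔸).continuous (-A)).symm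
  have hright : exp ((mul 𝕂 𝔸).flip A) = (mul 𝕂 𝔸).flip (exp A) := by
    have := map_exp (mulRightRingHom (𝕂 := 𝕂))
      ((mul 𝕂 𝔸).flip.continuous.comp MulOpposite.continuous_unop) (MulOpposite.op A)
    rw [exp_op] at this
    exact this.symm
  rw [sub_eq_add_neg, ← map_neg, exp_add_of_commute hcomm, hleft, hright]
  simp [mul_assoc]

end Hadamard

section SpanInvariant

variable {ι : Type*} [Fintype ι] [DecidableEq ι]

theorem Module.End.pow_apply_of_apply_eq_sum {R M : Type*} [CommSemiring R] [AddCommMonoid M]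
    [Module R M] (f : Module.End R M) (X : ι → M) (N : Matrix ι ι R)
    (hf : ∀ k, f (X k) = ∑ l, N k l • X l) (n : ℕ) (k : ι) :
    (f ^ n) (X k) = ∑ l, (N ^ n) k l • X l := by
  induction n generalizing k with
  | zero => simp [Matrix.one_apply, ite_smul]
  | succ n ih =>
    rw [pow_succ, pow_succ', Module.End.mul_apply, hf]
    simp only [map_sum, map_smul, ih, Finset.smul_sum, smul_smul, Matrix.mul_apply,
      Finset.sum_smul]
    exact Finset.sum_comm

theorem NormedSpace.exp_apply_of_apply_eq_sum {𝕂 E : Type*} [RCLike 𝕂] [NormedAddCommGroup E]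
    [NormedSpace 𝕂 E] [CompleteSpace E] (T : E →L[𝕂] E) (X : ι → E) (N : Matrix ι ι 𝕂)
    (hT : ∀ k, T (X k) = ∑ l, N k l • X l) (k : ι) :
    exp T (X k) = ∑ l, exp N k l • X l := by
  have hpow (n : ℕ) : (T ^ n) (X k) = ∑ l, (N ^ n) k l • X l := by
    have := Module.End.pow_apply_of_apply_eq_sum (T : E →ₗ[𝕂] E) X N hT n k
    rwa [← toLinearMap_pow] at this
  open scoped Matrix.Norms.Operator in
  let : NormedAlgebra ℚ (E →L[𝕂] E) := .restrictScalars ℚ 𝕂 _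
  have hE : HasSum (fun n : ℕ ↦ (n.factorial⁻¹ : 𝕂) • (T ^ n) (X k)) (exp T (X k)) := by
    simpa using (exp_series_hasSum_exp' (𝕂 := 𝕂) T).mapL (ContinuousLinearMap.apply 𝕂 E (X k))
  have hN (l : ι) : HasSum (fun n : ℕ ↦ (n.factorial⁻¹ : 𝕂) • (N ^ n) k l) (exp N k l) :=
    Pi.hasSum.mp (Pi.hasSum.mp (exp_series_hasSum_exp' (𝕂 := 𝕂) N) k) l
  refine hE.unique ?_
  convert hasSum_sum fun l _ ↦ (hN l).smul_const (X l) using 1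
  ext n
  simp only [hpow, Finset.smul_sum, smul_smul, smul_eq_mul]

end SpanInvariant

theorem Matrix.star_mulVec_dotProduct_mulVec {n α : Type*} [Fintype n] [CommSemiring α]
    [StarRing α] (M B : Matrix n n α) (x : n → α) :
    star (M *ᵥ x) ⬝ᵥ B *ᵥ (M *ᵥ x) = star x ⬝ᵥ (Mᴴ * B * M) *ᵥ x := by
  rw [star_mulVec, ← dotProduct_mulVec, mulVec_mulVec, mulVec_mulVec, Matrix.mul_assoc]

theorem Matrix.re_dotProduct_sum_smul_mulVec {n ι : Type*} [Fintype n] [Fintype ι] (x : n → ℂ)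
    (c : ι → ℝ) (B : ι → Matrix n n ℂ) :
    (star x ⬝ᵥ (∑ l, c l • B l) *ᵥ x).re = ∑ l, c l * (star x ⬝ᵥ B l *ᵥ x).re := by
  simp [Matrix.sum_mulVec, dotProduct_sum, Matrix.smul_mulVec, dotProduct_smul, Complex.re_sum]

theorem stokes_apply (x : Fin 2 → ℂ) (k : Fin 3) :
    stokes x k = (star x ⬝ᵥ pauli k *ᵥ x).re := by
  fin_cases k <;>
    simp [stokes, pauli, dotProduct, mulVec, Fin.sum_univ_succ, Complex.sq_norm,
      Complex.normSq_apply, Complex.mul_re, Complex.mul_im] <;> ring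

theorem conjTranspose_pdot (v : Fin 3 → ℝ) : (pdot v)ᴴ = pdot v := by
  ext i j
  fin_cases i <;> fin_cases j <;> simp [pdot, pauli, conjTranspose_apply]

theorem I_smul_pdot_commutator_pauli (α : Fin 3 → ℝ) (k : Fin 3) :
    (Complex.I • pdot α) * pauli k - pauli k * (Complex.I • pdot α) =
      ∑ l, ((2 : ℝ) • crossMat α) k l • pauli l := by
  fin_cases k <;> ext i j <;> fin_cases i <;> fin_cases j <;>
    simp [pdot, pauli, crossMat, Fin.sum_univ_succ, Complex.ext_iff] <;> ring_nf <;> trivial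

theorem conjTranspose_exp_mul_pauli_mul_exp (α : Fin 3 → ℝ) (k : Fin 3) :
    (exp (-(Complex.I • pdot α)))ᴴ * pauli k * exp (-(Complex.I • pdot α)) =
      ∑ l, exp ((2 : ℝ) • crossMat α) k l • pauli l := by
  open scoped Matrix.Norms.Operator in
  have hskew : (-(Complex.I • pdot α))ᴴ = -(-(Complex.I • pdot α)) := by
    simp [conjTranspose_pdot]
  rw [← Matrix.exp_conjTranspose, hskew]
  refine (exp_neg_mul_mul_exp (𝕂 := ℝ) _ (pauli k)).trans ?_
  refine exp_apply_of_apply_eq_sum _ _ _ (fun k ↦ ?_) k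
  rw [← I_smul_pdot_commutator_pauli]
  simp only [_root_.sub_apply, flip_apply, ContinuousLinearMap.mul_apply', mul_neg, neg_mul,
    sub_neg_eq_add]
  abel

theorem stokes_covariance (α : Fin 3 → ℝ) (x : Fin 2 → ℂ) :
    stokes ((NormedSpace.exp (-(Complex.I • pdot α))).mulVec x) =
      (NormedSpace.exp ((2 : ℝ) • crossMat α)).mulVec (stokes x) := by
  funext k
  rw [stokes_apply, star_mulVec_dotProduct_mulVec, conjTranspose_exp_mul_pauli_mul_exp,
    re_dotProduct_sum_smul_mulVec]
  simp only [stokes_apply, mulVec, dotProduct]
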